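/- arXiv:2008.03068 — 5 statements merged into one kernel-verified Lean document; each statement's English description precedes it below -/
import Mathlib

section
/- For integers m ≥ 0, n ≥ 0 with m - n ≥ 1 and z in the open unit disk, the integral over the unit disk (with respect to normalized area measure dA = dxdy/π) of w^m \bar{w}^n/(w - z) equals z^{m-n-1}(1 - |z|^{2n+2})/(n+1). -/
/-!
In polar coordinates the integral over the disc is `∫₀¹ 2πr · (average over |w| = r) dr`.
On the circle `|w| = r` we have `w^(n+k+1) w̄^n = r^(2n) · w · w^k`, so the circle average of the
integrand is `r^(2n)` times the average of `w · w^k / (w - z)`, which by Cauchy's formula is `z^k`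
when `|z| < r` and `0` when `r < |z|`. Integrating `2π r^(2n+1) z^k` over `|z| < r < 1` gives
`π z^k (1 - |z|^(2n+2)) / (n + 1)`.
-/

open MeasureTheory Metric Set Real Complex ComplexConjugate

namespace Complex

theorem slitPlane_ae_eq_univ : slitPlane =ᵐ[volume] (univ : Set ℂ) := by
  have hker : LinearMap.ker imLm ≠ ⊤ := fun h ↦ by
    simpa using (h ▸ Submodule.mem_top : I ∈ LinearMap.ker imLm)
  refine ae_eq_univ.mpr
    (measure_mono_null (fun w hw ↦ ?_) (Measure.addHaar_submodule volume _ hker))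
  simp only [mem_compl_iff, mem_slitPlane_iff, not_or, not_lt, ne_eq, not_not] at hw
  simpa using hw.2

theorem polarCoord_symm_image_Ioo_prod (R : ℝ) :
    Complex.polarCoord.symm '' (Ioo 0 R ×ˢ Ioo (-π) π) = ball 0 R ∩ slitPlane := by
  rw [Complex.polarCoord.symm_image_eq_source_inter_preimage
    (prod_mono Ioo_subset_Ioi_self subset_rfl), Complex.polarCoord_source]
  ext w
  simp only [mem_inter_iff, mem_preimage, Complex.polarCoord_apply, mem_prod, mem_Ioo,
    mem_ball_zero_iff]
  constructor
  · rintro ⟨hw, ⟨-, hR⟩, -⟩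
    exact ⟨hR, hw⟩
  · rintro ⟨hR, hw⟩
    exact ⟨hw, ⟨norm_pos_iff.mpr (slitPlane_ne_zero hw), hR⟩,
      neg_pi_lt_arg w, (arg_le_pi w).lt_of_ne (slitPlane_arg_ne_pi hw)⟩

theorem polarCoord_symm_image_Ioo_prod_ae_eq_ball (R : ℝ) :
    Complex.polarCoord.symm '' (Ioo 0 R ×ˢ Ioo (-π) π) =ᵐ[volume] ball (0 : ℂ) R := by
  rw [polarCoord_symm_image_Ioo_prod]
  simpa using (ae_eq_refl (ball (0 : ℂ) R)).inter slitPlane_ae_eq_univ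

theorem polarCoord_symm_eq_circleMap (r θ : ℝ) :
    Complex.polarCoord.symm (r, θ) = circleMap 0 r θ := by
  rw [Complex.polarCoord_symm_apply, circleMap_zero, exp_mul_I, ofReal_cos, ofReal_sin]

section PolarCoordinates

variable {E : Type*} [NormedAddCommGroup E] [NormedSpace ℝ E] {s : Set (ℝ × ℝ)}

theorem image_polarCoord_symm_eq (s : Set (ℝ × ℝ)) :
    Complex.polarCoord.symm '' s = measurableEquivRealProd.symm '' (polarCoord.symm '' s) := by
  rw [image_image]
  rfl

theorem integrableOn_image_polarCoord_symm_iff {f : ℂ → E} (hs : MeasurableSet s)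
    (hs' : s ⊆ polarCoord.target) :
    IntegrableOn f (Complex.polarCoord.symm '' s) ↔
      IntegrableOn (fun p : ℝ × ℝ ↦ p.1 • f (Complex.polarCoord.symm p)) s := by
  rw [image_polarCoord_symm_eq, (volume_preserving_equiv_real_prod.symm).integrableOn_image
    measurableEquivRealProd.symm.measurableEmbedding,
    integrableOn_image_iff_integrableOn_abs_det_fderiv_smul volume hs
      (fun p _ ↦ (hasFDerivAt_polarCoord_symm p).hasFDerivWithinAt)
      (polarCoord.symm.injOn.mono hs')]
  refine integrableOn_congr_fun (fun p hp ↦ ?_) hs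
  simp only [det_fderivPolarCoordSymm, abs_of_pos (mem_Ioi.mp (hs' hp).1)]
  rfl

theorem setIntegral_image_polarCoord_symm (f : ℂ → E) (hs : MeasurableSet s)
    (hs' : s ⊆ polarCoord.target) :
    ∫ w in Complex.polarCoord.symm '' s, f w =
      ∫ p in s, p.1 • f (Complex.polarCoord.symm p) := by
  rw [image_polarCoord_symm_eq, (volume_preserving_equiv_real_prod.symm).setIntegral_image_emb
    measurableEquivRealProd.symm.measurableEmbedding,
    integral_image_eq_integral_abs_det_fderiv_smul volume hs
      (fun p _ ↦ (hasFDerivAt_polarCoord_symm p).hasFDerivWithinAt)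
      (polarCoord.symm.injOn.mono hs')]
  refine setIntegral_congr_fun hs (fun p hp ↦ ?_)
  simp only [det_fderivPolarCoordSymm, abs_of_pos (mem_Ioi.mp (hs' hp).1)]
  rfl

end PolarCoordinates

end Complex

section PolarCoordinates

variable {E : Type*} [NormedAddCommGroup E] [NormedSpace ℝ E]

theorem integral_Ioo_neg_pi_pi_circleMap (f : ℂ → E) (c : ℂ) (r : ℝ) :
    ∫ θ in Ioo (-π) π, f (circleMap c r θ) = (2 * π) • circleAverage f c r := by
  rw [circleAverage_eq_integral_add (-π), smul_inv_smul₀ (by positivity),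
    intervalIntegral.integral_comp_add_right (fun θ ↦ f (circleMap c r θ)),
    intervalIntegral.integral_of_le (by linarith [pi_pos]), integral_Ioc_eq_integral_Ioo]
  ring_nf

theorem setIntegral_ball_eq_integral_circleAverage {f : ℂ → E} {R : ℝ}
    (hf : IntegrableOn f (ball 0 R)) :
    ∫ w in ball 0 R, f w = ∫ r in Ioo 0 R, (2 * π * r) • circleAverage f 0 r := by
  have hS : MeasurableSet (Ioo 0 R ×ˢ Ioo (-π) π) := measurableSet_Ioo.prod measurableSet_Ioo
  have hS' : Ioo 0 R ×ˢ Ioo (-π) π ⊆ polarCoord.target :=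
    prod_mono Ioo_subset_Ioi_self subset_rfl
  have hpolar : IntegrableOn (fun p : ℝ × ℝ ↦ p.1 • f (Complex.polarCoord.symm p))
      (Ioo 0 R ×ˢ Ioo (-π) π) (volume.prod volume) :=
    (Complex.integrableOn_image_polarCoord_symm_iff hS hS').mp
      (hf.congr_set_ae (Complex.polarCoord_symm_image_Ioo_prod_ae_eq_ball R))
  rw [← setIntegral_congr_set (Complex.polarCoord_symm_image_Ioo_prod_ae_eq_ball R),
    Complex.setIntegral_image_polarCoord_symm f hS hS', Measure.volume_eq_prod,
    setIntegral_prod _ hpolar]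
  refine setIntegral_congr_fun measurableSet_Ioo (fun r _ ↦ ?_)
  simp only [Complex.polarCoord_symm_eq_circleMap]
  rw [integral_smul, integral_Ioo_neg_pi_pi_circleMap, smul_smul, mul_comm r]

end PolarCoordinates

section CauchyKernel

variable {g : ℂ → ℂ} {z : ℂ} {r : ℝ}

theorem circleAverage_mul_div_sub_eq_circleIntegral (hr : 0 < r) :
    circleAverage (fun w ↦ w * g w / (w - z)) 0 r =
      (2 * π * I)⁻¹ * ∮ w in C(0, r), (w - z)⁻¹ • g w := by
  rw [circleAverage_eq_circleIntegral hr.ne', smul_eq_mul]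
  congr 1
  refine circleIntegral.integral_congr hr.le (fun w hw ↦ ?_)
  have hw0 : w ≠ 0 := by
    rintro rfl
    exact hr.ne (by simpa using hw)
  simp only [sub_zero, smul_eq_mul]
  field_simp

theorem circleAverage_mul_div_sub_of_norm_lt (hg : DiffContOnCl ℂ g (ball 0 r))
    (hz : ‖z‖ < r) :
    circleAverage (fun w ↦ w * g w / (w - z)) 0 r = g z := by
  rw [circleAverage_mul_div_sub_eq_circleIntegral ((norm_nonneg z).trans_lt hz),
    hg.circleIntegral_sub_inv_smul (mem_ball_zero_iff.mpr hz), smul_eq_mul,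
    inv_mul_cancel_left₀ (by simp [pi_ne_zero, I_ne_zero])]

theorem circleAverage_mul_div_sub_of_lt_norm (hg : DiffContOnCl ℂ g (ball 0 r)) (hr : 0 < r)
    (hz : r < ‖z‖) :
    circleAverage (fun w ↦ w * g w / (w - z)) 0 r = 0 := by
  have hkernel : DiffContOnCl ℂ (fun w ↦ (w - z)⁻¹) (ball 0 r) := by
    refine (differentiable_id.sub_const z).diffContOnCl.inv (fun w hw ↦ sub_ne_zero.mpr ?_)
    rintro rfl
    exact hz.not_ge (mem_closedBall_zero_iff.mp (closure_ball_subset_closedBall hw))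
  rw [circleAverage_mul_div_sub_eq_circleIntegral hr,
    (hkernel.smul hg).circleIntegral_eq_zero hr.le, mul_zero]

end CauchyKernel

theorem circleAverage_pow_mul_conj_pow_div_sub (n k : ℕ) (z : ℂ) {r : ℝ} (hr : 0 < r)
    (hrz : r ≠ ‖z‖) :
    circleAverage (fun w ↦ w ^ (n + k + 1) * conj w ^ n / (w - z)) 0 r =
      if ‖z‖ < r then (r : ℂ) ^ (2 * n) * z ^ k else 0 := by
  have hsphere : EqOn (fun w ↦ w ^ (n + k + 1) * conj w ^ n / (w - z))
      (fun w ↦ w * ((r : ℂ) ^ (2 * n) * w ^ k) / (w - z)) (sphere 0 |r|) := by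
    intro w hw
    rw [mem_sphere_zero_iff_norm, abs_of_pos hr] at hw
    have hconj : w ^ (n + k + 1) * conj w ^ n = w * (w * conj w) ^ n * w ^ k := by ring
    simp only [hconj, mul_conj', hw]
    ring
  have hdiff : DiffContOnCl ℂ (fun w ↦ (r : ℂ) ^ (2 * n) * w ^ k) (ball 0 r) :=
    ((differentiable_pow k).const_mul _).diffContOnCl
  rw [circleAverage_congr_sphere hsphere]
  split_ifs with hz
  · exact circleAverage_mul_div_sub_of_norm_lt hdiff hz
  · exact circleAverage_mul_div_sub_of_lt_norm hdiff hr ((not_lt.mp hz).lt_of_ne hrz)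

theorem integrableOn_inv_norm_sub_ball (z : ℂ) (R : ℝ) :
    IntegrableOn (fun w : ℂ ↦ ‖w - z‖⁻¹) (ball z R) := by
  have h0 : IntegrableOn (fun w : ℂ ↦ ‖w‖⁻¹) (ball 0 R) := by
    refine integrableOn_ball_of_norm_le_rpow (C := 1) (α := 1) (by simp) (by simp)
      (.of_forall fun w ↦ ?_) (by fun_prop)
    simp [rpow_neg_one]
  have hpre : (· - z) ⁻¹' ball 0 R = ball z R := by
    ext w
    simp [dist_eq_norm]
  rw [← (measurePreserving_sub_right volume z).integrableOn_comp_preimage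
    (measurableEmbedding_subRight z), hpre] at h0
  exact h0

theorem integrableOn_pow_mul_conj_pow_div_sub (m n : ℕ) (z : ℂ) :
    IntegrableOn (fun w ↦ w ^ m * conj w ^ n / (w - z)) (ball 0 1) := by
  refine ((integrableOn_inv_norm_sub_ball z (1 + ‖z‖)).mono_set ?_).mono'
    (by fun_prop : Measurable fun w ↦ w ^ m * conj w ^ n / (w - z)).aestronglyMeasurable ?_
  · exact ball_subset_ball' (by simp [dist_comm])
  · filter_upwards [ae_restrict_mem measurableSet_ball] with w hw
    have hw : ‖w‖ ≤ 1 := (mem_ball_zero_iff.mp hw).le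
    rw [norm_div, norm_mul, norm_pow, norm_pow, RCLike.norm_conj, ← one_div]
    gcongr
    exact mul_le_one₀ (pow_le_one₀ (norm_nonneg w) hw) (by positivity)
      (pow_le_one₀ (norm_nonneg w) hw)

theorem integral_Ioo_indicator_Ioi_pow {a b : ℝ} (ha : 0 ≤ a) (hab : a ≤ b) (j : ℕ) :
    ∫ r in Ioo 0 b, (Ioi a).indicator (fun r ↦ r ^ j) r =
      (b ^ (j + 1) - a ^ (j + 1)) / (j + 1) := by
  rw [setIntegral_indicator measurableSet_Ioi, Ioo_inter_Ioi, max_eq_right ha,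
    ← integral_Ioc_eq_integral_Ioo, ← intervalIntegral.integral_of_le hab, integral_pow]

theorem stmt_0 (m n : ℕ) (h : 1 ≤ (m : ℤ) - n) (z : ℂ) (hz : z ∈ ball (0 : ℂ) 1) :
    (Real.pi : ℂ)⁻¹ * ∫ w in ball (0 : ℂ) 1, w ^ m * (starRingEnd ℂ w) ^ n / (w - z)
      = z ^ (m - n - 1) * (1 - (‖z‖ : ℂ) ^ (2 * n + 2)) / (n + 1) := by
  obtain ⟨k, rfl⟩ : ∃ k, m = n + k + 1 := ⟨m - n - 1, by omega⟩
  have hz1 : ‖z‖ < 1 := mem_ball_zero_iff.mp hz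
  have hradial : ∀ᵐ r ∂volume.restrict (Ioo 0 1),
      (2 * π * r) • circleAverage (fun w ↦ w ^ (n + k + 1) * conj w ^ n / (w - z)) 0 r =
        ((2 * π * (Ioi ‖z‖).indicator (fun r ↦ r ^ (2 * n + 1)) r : ℝ) : ℂ) * z ^ k := by
    filter_upwards [ae_restrict_mem measurableSet_Ioo, ae_restrict_of_ae (volume.ae_ne ‖z‖)]
      with r hr hrz
    rw [circleAverage_pow_mul_conj_pow_div_sub n k z hr.1 hrz]
    split_ifs with hzr
    · rw [indicator_of_mem (mem_Ioi.mpr hzr), Complex.real_smul]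
      push_cast
      ring
    · rw [indicator_of_notMem (show r ∉ Ioi ‖z‖ from hzr)]
      simp
  rw [setIntegral_ball_eq_integral_circleAverage (integrableOn_pow_mul_conj_pow_div_sub _ _ z),
    integral_congr_ae hradial, integral_mul_const, integral_complex_ofReal, integral_const_mul,
    integral_Ioo_indicator_Ioi_pow (norm_nonneg z) hz1.le, show n + k + 1 - n - 1 = k by omega]
  push_cast
  rw [show (2 * n + 1 : ℂ) + 1 = 2 * (n + 1) by ring]
  field_simp
  ring
end

section
/- For 1 ≤ q < 2, the function Φ(t) = (2/(2−q))·₂F₁(q/2, q/2 − 1; 1; t) + t^{q/2}·₂F₁(q/2, q/2; 2; t) is monotone increasing on [0, 1]. -/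
/-- The Gauss hypergeometric series ₂F₁(a,b;c;t). -/
noncomputable def hyp2F1 (a b c t : ℝ) : ℝ :=
  ∑' n : ℕ, ((ascPochhammer ℝ n).eval a * (ascPochhammer ℝ n).eval b)
      / ((ascPochhammer ℝ n).eval c * n.factorial) * t ^ n

/-!
Put `a = q / 2 ∈ (0, 1)` and let `d n` be the coefficients of `₂F₁(a, a; 2; t)`. The coefficients
of `₂F₁(a, a - 1; 1; t)` are `1` and `(a - 1) (a + n) / (n + 1) · d n`, so
`Φ(t) = 1 / (1 - a) + ∑ d n (t ^ (a + n) - (a + n) / (n + 1) · t ^ (n + 1))`.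
Every `d n` is nonnegative and every bracket is increasing on `[0, 1]`: its derivative is
`(a + n) (t ^ (a + n - 1) - t ^ n) ≥ 0`. The series converge on `[0, 1]` because
`(1 - a) d n ≤ r n ^ 2 - r (n + 1) ^ 2` with `r n = (a)ₙ / n!`, which telescopes.
-/

open Real Set

lemma monotoneOn_rpow_sub_div_mul_rpow {s k : ℝ} (hs : 0 < s) (hsk : s ≤ k) :
    MonotoneOn (fun t : ℝ => t ^ s - s / k * t ^ k) (Icc 0 1) := by
  have hk : k ≠ 0 := by linarith
  refine monotoneOn_of_hasDerivWithinAt_nonneg (convex_Icc 0 1)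
    (f' := fun t => s * (t ^ (s - 1) - t ^ (k - 1))) ?_ ?_ ?_
  · exact ContinuousOn.sub
      (fun x _ => (continuousAt_rpow_const x s (Or.inr hs.le)).continuousWithinAt)
      (continuousOn_const.mul fun x _ =>
        (continuousAt_rpow_const x k (Or.inr (by linarith))).continuousWithinAt)
  · rw [interior_Icc]
    intro x hx
    have hx0 : x ≠ 0 := hx.1.ne'
    refine (((hasDerivAt_rpow_const (p := s) (Or.inl hx0)).sub
      ((hasDerivAt_rpow_const (p := k) (Or.inl hx0)).const_mul (s / k))).congr_deriv
        ?_).hasDerivWithinAt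
    rw [← mul_assoc, div_mul_cancel₀ s hk, mul_sub]
  · rw [interior_Icc]
    intro x hx
    exact mul_nonneg hs.le
      (sub_nonneg.2 (rpow_le_rpow_of_exponent_ge hx.1 hx.2.le (by linarith)))

noncomputable def hyp2F1Coeff (a b c : ℝ) (n : ℕ) : ℝ :=
  (ascPochhammer ℝ n).eval a * (ascPochhammer ℝ n).eval b
    / ((ascPochhammer ℝ n).eval c * n.factorial)

lemma hyp2F1Coeff_zero (a b c : ℝ) : hyp2F1Coeff a b c 0 = 1 := by
  simp [hyp2F1Coeff]

section Coefficients

variable (a : ℝ) (n : ℕ)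

lemma hyp2F1Coeff_self_two :
    hyp2F1Coeff a a 2 n = ((ascPochhammer ℝ n).eval a / n.factorial) ^ 2 / (n + 1) := by
  have htwo : (ascPochhammer ℝ n).eval 2 = ((n + 1).factorial : ℝ) := by
    simpa [add_comm 1 n, one_add_one_eq_two] using factorial_mul_ascPochhammer ℝ 1 n
  rw [hyp2F1Coeff, htwo, Nat.factorial_succ]
  push_cast
  field_simp

lemma hyp2F1Coeff_self_two_nonneg : 0 ≤ hyp2F1Coeff a a 2 n := by
  rw [hyp2F1Coeff_self_two]
  positivity

lemma hyp2F1Coeff_sub_one_one_succ :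
    hyp2F1Coeff a (a - 1) 1 (n + 1) = (a - 1) * ((a + n) / (n + 1)) * hyp2F1Coeff a a 2 n := by
  have hshift : (ascPochhammer ℝ (n + 1)).eval (a - 1) = (a - 1) * (ascPochhammer ℝ n).eval a := by
    simp [ascPochhammer_succ_left, Polynomial.eval_comp]
  rw [hyp2F1Coeff_self_two, hyp2F1Coeff, hshift, ascPochhammer_succ_eval, ascPochhammer_eval_one,
    Nat.factorial_succ]
  push_cast
  field_simp

lemma one_sub_mul_hyp2F1Coeff_self_two_le (ha0 : 0 ≤ a) (ha1 : a ≤ 1) :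
    (1 - a) * hyp2F1Coeff a a 2 n
      ≤ ((ascPochhammer ℝ n).eval a / n.factorial) ^ 2
        - ((ascPochhammer ℝ (n + 1)).eval a / (n + 1).factorial) ^ 2 := by
  have hsucc : (ascPochhammer ℝ (n + 1)).eval a / (n + 1).factorial
      = (ascPochhammer ℝ n).eval a / n.factorial * ((a + n) / (n + 1)) := by
    rw [ascPochhammer_succ_eval, Nat.factorial_succ]
    push_cast
    field_simp
  set r := (ascPochhammer ℝ n).eval a / n.factorial
  have hgap : r ^ 2 - (r * ((a + n) / (n + 1))) ^ 2 - (1 - a) * (r ^ 2 / (n + 1))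
      = (1 - a) * r ^ 2 * (a + n) / (n + 1) ^ 2 := by
    field_simp
    ring
  have hgap_nonneg : 0 ≤ (1 - a) * r ^ 2 * (a + n) / (n + 1) ^ 2 := by
    have h1a : 0 ≤ 1 - a := by linarith
    positivity
  rw [hyp2F1Coeff_self_two, hsucc]
  linarith

end Coefficients

lemma summable_hyp2F1Coeff_self_two {a : ℝ} (ha0 : 0 ≤ a) (ha1 : a < 1) :
    Summable (hyp2F1Coeff a a 2) := by
  refine summable_of_sum_range_le (c := 1 / (1 - a)) (hyp2F1Coeff_self_two_nonneg a) fun n => ?_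
  rw [le_div_iff₀ (sub_pos.2 ha1)]
  calc (∑ i ∈ Finset.range n, hyp2F1Coeff a a 2 i) * (1 - a)
      = ∑ i ∈ Finset.range n, (1 - a) * hyp2F1Coeff a a 2 i := by
        rw [Finset.sum_mul]
        exact Finset.sum_congr rfl fun i _ => mul_comm _ _
    _ ≤ ∑ i ∈ Finset.range n, (((ascPochhammer ℝ i).eval a / i.factorial) ^ 2
          - ((ascPochhammer ℝ (i + 1)).eval a / (i + 1).factorial) ^ 2) :=
        Finset.sum_le_sum fun i _ => one_sub_mul_hyp2F1Coeff_self_two_le a i ha0 ha1.le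
    _ = 1 - ((ascPochhammer ℝ n).eval a / n.factorial) ^ 2 := by
        rw [Finset.sum_range_sub' (fun i => ((ascPochhammer ℝ i).eval a / i.factorial) ^ 2)]
        simp
    _ ≤ 1 := by
        have := sq_nonneg ((ascPochhammer ℝ n).eval a / n.factorial)
        linarith

theorem hasSum_hyp2F1_combination {a t : ℝ} (ha0 : 0 < a) (ha1 : a < 1) (ht : t ∈ Icc 0 1) :
    HasSum
      (fun n : ℕ => hyp2F1Coeff a a 2 n * (t ^ (a + n) - (a + n) / (n + 1) * t ^ ((n : ℝ) + 1)))
      (1 / (1 - a) * hyp2F1 a (a - 1) 1 t + t ^ a * hyp2F1 a a 2 t - 1 / (1 - a)) := by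
  obtain ⟨ht0, ht1⟩ := ht
  have hd := summable_hyp2F1Coeff_self_two ha0.le ha1
  have hdt : HasSum (fun n => hyp2F1Coeff a a 2 n * t ^ n) (hyp2F1 a a 2 t) :=
    (hd.of_nonneg_of_le (fun n => mul_nonneg (hyp2F1Coeff_self_two_nonneg a n) (pow_nonneg ht0 n))
      fun n => mul_le_of_le_one_right (hyp2F1Coeff_self_two_nonneg a n)
        (pow_le_one₀ ht0 ht1)).hasSum
  have hct : HasSum (fun n => hyp2F1Coeff a (a - 1) 1 (n + 1) * t ^ (n + 1))
      (hyp2F1 a (a - 1) 1 t - 1) := by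
    have hshift : Summable fun n => hyp2F1Coeff a (a - 1) 1 (n + 1) * t ^ (n + 1) := by
      simp_rw [hyp2F1Coeff_sub_one_one_succ, mul_assoc]
      refine (hd.of_nonneg_of_le (fun n => ?_) fun n => ?_).mul_left (a - 1)
      · have := hyp2F1Coeff_self_two_nonneg a n
        positivity
      · have hratio : (a + n) / (n + 1) ≤ 1 := by
          rw [div_le_one (by positivity)]
          linarith
        have hdn := hyp2F1Coeff_self_two_nonneg a n
        calc (a + n) / (n + 1) * (hyp2F1Coeff a a 2 n * t ^ (n + 1))
            ≤ 1 * hyp2F1Coeff a a 2 n :=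
              mul_le_mul hratio (mul_le_of_le_one_right hdn (pow_le_one₀ ht0 ht1))
                (by positivity) zero_le_one
          _ = hyp2F1Coeff a a 2 n := one_mul _
    have hfull := (summable_nat_add_iff (f := fun n => hyp2F1Coeff a (a - 1) 1 n * t ^ n) 1).mp
      hshift
    have := (hasSum_nat_add_iff' 1).mpr hfull.hasSum
    rwa [Finset.sum_range_one, hyp2F1Coeff_zero, pow_zero, mul_one] at this
  rw [show 1 / (1 - a) * hyp2F1 a (a - 1) 1 t + t ^ a * hyp2F1 a a 2 t - 1 / (1 - a)
      = t ^ a * hyp2F1 a a 2 t + 1 / (1 - a) * (hyp2F1 a (a - 1) 1 t - 1) by ring]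
  refine ((hdt.mul_left (t ^ a)).add (hct.mul_left (1 / (1 - a)))).congr_fun fun n => ?_
  have h1a : 1 - a ≠ 0 := by linarith
  rw [hyp2F1Coeff_sub_one_one_succ, rpow_add_natCast' ht0 (by positivity),
    show (n : ℝ) + 1 = ((n + 1 : ℕ) : ℝ) by push_cast; ring, rpow_natCast]
  field_simp
  ring

theorem monotoneOn_hyp2F1_combination {a : ℝ} (ha0 : 0 < a) (ha1 : a < 1) :
    MonotoneOn (fun t : ℝ => 1 / (1 - a) * hyp2F1 a (a - 1) 1 t + t ^ a * hyp2F1 a a 2 t)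
      (Icc 0 1) := by
  intro s hs t ht hst
  have hterm (n : ℕ) := mul_le_mul_of_nonneg_left
    (monotoneOn_rpow_sub_div_mul_rpow (s := a + n) (k := n + 1) (by positivity) (by linarith)
      hs ht hst) (hyp2F1Coeff_self_two_nonneg a n)
  have := hasSum_le hterm (hasSum_hyp2F1_combination ha0 ha1 hs)
    (hasSum_hyp2F1_combination ha0 ha1 ht)
  simpa using this

theorem stmt_7 (q : ℝ) (hq1 : 1 ≤ q) (hq2 : q < 2) :
    MonotoneOn
      (fun t : ℝ =>
        2 / (2 - q) * hyp2F1 (q / 2) (q / 2 - 1) 1 t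
          + t ^ (q / 2) * hyp2F1 (q / 2) (q / 2) 2 t)
      (Set.Icc (0 : ℝ) 1) := by
  have hcoeff : 2 / (2 - q) = 1 / (1 - q / 2) := by
    rw [show 1 - q / 2 = (2 - q) / 2 by ring, one_div_div]
  rw [hcoeff]
  exact monotoneOn_hyp2F1_combination (by linarith) (by linarith)
end

section
/- For 1 ≤ q < 2, ∫_{\mathbb{D}} |1 − w|^{−q} dA(w) = Γ(2−q)/Γ(2 − q/2)², where dA is the normalized area measure on the unit disk. -/
/-!
The substitution `z = 1 - w` turns the integral into `∫_{|z - 1| < 1} |z|^{-q} dz`. In polar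
coordinates about `0` this disk is `{0 < r < 2 cos θ, |θ| < π/2}`, so the radial integral gives
`(2 cos θ)^{2-q} / (2-q)`. The substitution `t = (1 + sin θ)/2` turns `∫ cos^s θ dθ` into the
Beta integral `2^s B((s+1)/2, (s+1)/2)`, and Legendre's duplication formula brings everything to
`π Γ(2-q) / Γ(2-q/2)²`.
-/

open MeasureTheory Metric Set Real
open scoped ENNReal

theorem setIntegral_ball_comp_sub_left {G E : Type*} [NormedAddCommGroup G] [MeasurableSpace G]
    [BorelSpace G] [NormedAddCommGroup E] [NormedSpace ℝ E] (μ : Measure G)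
    [μ.IsAddLeftInvariant] [μ.IsNegInvariant] (f : G → E) (a c : G) (r : ℝ) :
    ∫ w in ball c r, f (a - w) ∂μ = ∫ z in ball (a - c) r, f z ∂μ := by
  have hball : (fun w => a - w) ⁻¹' ball (a - c) r = ball c r := by
    ext w
    simp [dist_eq_norm, norm_sub_rev]
  rw [← hball]
  exact (Measure.measurePreserving_sub_left μ a).setIntegral_preimage_emb
    (Homeomorph.subLeft a).measurableEmbedding f _

theorem integral_Ioo_rpow_mul_one_sub_rpow {a b : ℝ} (ha : 0 < a) (hb : 0 < b) :
    ∫ t in Ioo (0 : ℝ) 1, t ^ (a - 1) * (1 - t) ^ (b - 1)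
      = Gamma a * Gamma b / Gamma (a + b) := by
  have hbeta : Complex.betaIntegral a b
      = ((∫ t in (0 : ℝ)..1, t ^ (a - 1) * (1 - t) ^ (b - 1) : ℝ) : ℂ) := by
    rw [← intervalIntegral.integral_ofReal]
    refine intervalIntegral.integral_congr fun t ht => ?_
    rw [uIcc_of_le zero_le_one] at ht
    push_cast
    rw [Complex.ofReal_cpow ht.1, Complex.ofReal_cpow (sub_nonneg.2 ht.2)]
    push_cast
    ring_nf
  rw [← ProbabilityTheory.beta, ProbabilityTheory.beta_eq_betaIntegralReal a b ha hb, hbeta,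
    Complex.ofReal_re, intervalIntegral.integral_of_le zero_le_one, integral_Ioc_eq_integral_Ioo]

theorem two_rpow_mul_Gamma_mul_Gamma_add_half (s : ℝ) :
    2 ^ s * Gamma ((s + 1) / 2) * Gamma (s / 2 + 1) = √π * Gamma (s + 1) := by
  have h := Gamma_mul_Gamma_add_half ((s + 1) / 2)
  rw [show (s + 1) / 2 + 1 / 2 = s / 2 + 1 by ring, show 2 * ((s + 1) / 2) = s + 1 by ring,
    show 1 - (s + 1) = -s by ring, rpow_neg zero_le_two] at h
  have h2 : (2 : ℝ) ^ s ≠ 0 := (rpow_pos_of_pos two_pos s).ne'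
  rw [mul_assoc, h]
  field_simp

theorem image_one_add_sin_div_two_Ioo :
    (fun θ => (1 + sin θ) / 2) '' Ioo (-(π / 2)) (π / 2) = Ioo 0 1 := by
  rw [show (fun θ => (1 + sin θ) / 2) = (fun x => (1 + x) / 2) ∘ sin from rfl, image_comp,
    show sin '' Ioo (-(π / 2)) (π / 2) = Ioo (-1) 1 from
      sinPartialHomeomorph.image_source_eq_target]
  ext t
  simp only [mem_image, mem_Ioo]
  constructor
  · rintro ⟨x, ⟨hx₁, hx₂⟩, rfl⟩
    constructor <;> linarith
  · rintro ⟨ht₀, ht₁⟩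
    exact ⟨2 * t - 1, ⟨by linarith, by linarith⟩, by ring⟩

theorem integral_cos_rpow {s : ℝ} (hs : -1 < s) :
    ∫ θ in Ioo (-(π / 2)) (π / 2), cos θ ^ s
      = √π * Gamma ((s + 1) / 2) / Gamma (s / 2 + 1) := by
  have ha : 0 < (s + 1) / 2 := by linarith
  have hsubst := integral_image_eq_integral_abs_deriv_smul measurableSet_Ioo
    (fun θ _ => (((hasDerivAt_sin θ).const_add 1).div_const 2).hasDerivWithinAt)
    (fun x hx y hy hxy =>
      injOn_sin (Ioo_subset_Icc_self hx) (Ioo_subset_Icc_self hy) (by linarith [hxy]))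
    (fun t => 2 ^ s * (t ^ ((s + 1) / 2 - 1) * (1 - t) ^ ((s + 1) / 2 - 1)))
  rw [image_one_add_sin_div_two_Ioo, integral_const_mul,
    integral_Ioo_rpow_mul_one_sub_rpow ha ha] at hsubst
  have hintegrand : EqOn
      (fun θ => |cos θ / 2| • (2 ^ s * (((1 + sin θ) / 2) ^ ((s + 1) / 2 - 1)
        * (1 - (1 + sin θ) / 2) ^ ((s + 1) / 2 - 1))))
      (fun θ => cos θ ^ s) (Ioo (-(π / 2)) (π / 2)) := by
    intro θ hθ
    have hc : 0 < cos θ := cos_pos_of_mem_Ioo hθ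
    have hprod : (1 + sin θ) / 2 * (1 - (1 + sin θ) / 2) = (cos θ / 2) ^ 2 := by
      linear_combination -(sin_sq_add_cos_sq θ) / 4
    simp only [smul_eq_mul]
    rw [← mul_rpow (by linarith [neg_one_le_sin θ]) (by linarith [sin_le_one θ]), hprod,
      ← rpow_natCast, ← rpow_mul (by positivity), abs_of_pos (by positivity),
      show ((2 : ℕ) : ℝ) * ((s + 1) / 2 - 1) = s - 1 by push_cast; ring,
      rpow_sub_one (by positivity), div_rpow hc.le zero_le_two]
    field_simp
  rw [setIntegral_congr_fun measurableSet_Ioo hintegrand] at hsubst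
  rw [← hsubst, show (s + 1) / 2 + (s + 1) / 2 = s + 1 by ring, mul_div_assoc',
    div_eq_div_iff (Gamma_pos_of_pos (by linarith)).ne' (Gamma_pos_of_pos (by linarith)).ne']
  linear_combination Gamma ((s + 1) / 2) * two_rpow_mul_Gamma_mul_Gamma_add_half s

theorem polarCoord_symm_mem_ball_one_iff {r : ℝ} (hr : 0 < r) (θ : ℝ) :
    Complex.polarCoord.symm (r, θ) ∈ ball (1 : ℂ) 1 ↔ r < 2 * cos θ := by
  set z := Complex.polarCoord.symm (r, θ)
  have hre : (z - 1).re = r * cos θ - 1 := by simp [z, Complex.cos_ofReal_re]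
  have him : (z - 1).im = r * sin θ := by simp [z, Complex.sin_ofReal_re]
  have hnorm : ‖z - 1‖ ^ 2 = r * (r - 2 * cos θ) + 1 := by
    rw [Complex.sq_norm, Complex.normSq_apply, hre, him]
    linear_combination r ^ 2 * sin_sq_add_cos_sq θ
  rw [mem_ball, dist_eq_norm, ← sq_lt_one_iff₀ (norm_nonneg _), hnorm]
  constructor <;> intro h <;> nlinarith

theorem cos_nonpos_of_mem_Ioo_diff {θ : ℝ}
    (hθ : θ ∈ Ioo (-π) π \ Ioo (-(π / 2)) (π / 2)) : cos θ ≤ 0 := by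
  obtain ⟨⟨h₁, h₂⟩, h⟩ := hθ
  rw [mem_Ioo, not_and_or, not_lt, not_lt] at h
  rcases h with h | h
  · rw [← cos_neg]
    exact cos_nonpos_of_pi_div_two_le_of_le (by linarith) (by linarith)
  · exact cos_nonpos_of_pi_div_two_le_of_le h (by linarith)

theorem lintegral_ball_one_comp_norm (f : ℝ → ℝ≥0∞) (hf : Measurable f) :
    ∫⁻ z in ball (1 : ℂ) 1, f ‖z‖
      = ∫⁻ θ in Ioo (-(π / 2)) (π / 2),
          ∫⁻ r in Ioo 0 (2 * cos θ), ENNReal.ofReal r * f r := by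
  set S := {p : ℝ × ℝ | p.1 < 2 * cos p.2}
  set g : ℝ × ℝ → ℝ≥0∞ := S.indicator fun p => ENNReal.ofReal p.1 * f p.1
  have hS : MeasurableSet S := measurableSet_lt measurable_fst (by fun_prop)
  have hpolar : ∫⁻ z in ball (1 : ℂ) 1, f ‖z‖ = ∫⁻ p in Ioi 0 ×ˢ Ioo (-π) π, g p := by
    rw [← lintegral_indicator measurableSet_ball, ← Complex.lintegral_comp_polarCoord_symm,
      polarCoord_target]
    refine setLIntegral_congr_fun (measurableSet_Ioi.prod measurableSet_Ioo) fun p hp => ?_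
    obtain ⟨r, θ⟩ := p
    have hr : 0 < r := hp.1
    simp only [g, smul_eq_mul]
    by_cases h : r < 2 * cos θ
    · rw [indicator_of_mem ((polarCoord_symm_mem_ball_one_iff hr θ).2 h),
        indicator_of_mem (show (r, θ) ∈ S from h), Complex.norm_polarCoord_symm,
        abs_of_pos hr]
    · rw [indicator_of_notMem (mt (polarCoord_symm_mem_ball_one_iff hr θ).1 h),
        indicator_of_notMem (show (r, θ) ∉ S from h), mul_zero]
  have hslice (θ : ℝ) :
      ∫⁻ r in Ioi 0, g (r, θ) = ∫⁻ r in Ioo 0 (2 * cos θ), ENNReal.ofReal r * f r := by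
    change ∫⁻ r in Ioi 0, (Iio (2 * cos θ)).indicator (fun r => ENNReal.ofReal r * f r) r = _
    rw [setLIntegral_indicator measurableSet_Iio, Iio_inter_Ioi]
  have hvanish : ∀ θ ∈ Ioo (-π) π \ Ioo (-(π / 2)) (π / 2),
      ∫⁻ r in Ioo 0 (2 * cos θ), ENNReal.ofReal r * f r = 0 := by
    intro θ hθ
    rw [Ioo_eq_empty (by linarith [cos_nonpos_of_mem_Ioo_diff hθ]), Measure.restrict_empty,
      lintegral_zero_measure]
  rw [hpolar, Measure.volume_eq_prod, ← Measure.prod_restrict, lintegral_prod_symm' g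
    ((by fun_prop : Measurable fun p : ℝ × ℝ => ENNReal.ofReal p.1 * f p.1).indicator hS)]
  simp_rw [hslice]
  rw [← lintegral_inter_add_sdiff _ _ measurableSet_Ioo,
    setLIntegral_eq_zero (measurableSet_Ioo.diff measurableSet_Ioo) hvanish, add_zero,
    inter_eq_self_of_subset_right (Ioo_subset_Ioo (by linarith [pi_pos]) (by linarith [pi_pos]))]

theorem lintegral_Ioo_ofReal_rpow {p a : ℝ} (hp : -1 < p) (ha : 0 ≤ a) :
    ∫⁻ r in Ioo 0 a, ENNReal.ofReal (r ^ p) = ENNReal.ofReal (a ^ (p + 1) / (p + 1)) := by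
  rw [← ofReal_integral_eq_lintegral_ofReal
      ((intervalIntegral.intervalIntegrable_rpow' hp).1.mono_set Ioo_subset_Ioc_self)
      (ae_restrict_of_forall_mem measurableSet_Ioo fun r hr => rpow_nonneg hr.1.le p),
    ← integral_Ioc_eq_integral_Ioo, ← intervalIntegral.integral_of_le ha,
    integral_rpow (.inl hp), zero_rpow (by linarith), sub_zero]

theorem integral_ball_one_norm_rpow_neg {q : ℝ} (hq : q < 2) :
    ∫ z in ball (1 : ℂ) 1, ‖z‖ ^ (-q)
      = 2 ^ (2 - q) / (2 - q) * ∫ θ in Ioo (-(π / 2)) (π / 2), cos θ ^ (2 - q) := by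
  have hinner : ∀ θ ∈ Ioo (-(π / 2)) (π / 2),
      ∫⁻ r in Ioo 0 (2 * cos θ), ENNReal.ofReal r * ENNReal.ofReal (r ^ (-q))
        = ENNReal.ofReal (2 ^ (2 - q) / (2 - q) * cos θ ^ (2 - q)) := by
    intro θ hθ
    have hc : 0 < cos θ := cos_pos_of_mem_Ioo hθ
    have hmul : EqOn (fun r => ENNReal.ofReal r * ENNReal.ofReal (r ^ (-q)))
        (fun r => ENNReal.ofReal (r ^ (1 - q))) (Ioo 0 (2 * cos θ)) := fun r hr => by
      beta_reduce
      rw [← ENNReal.ofReal_mul hr.1.le, sub_eq_add_neg, rpow_add hr.1, rpow_one]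
    rw [setLIntegral_congr_fun measurableSet_Ioo hmul,
      lintegral_Ioo_ofReal_rpow (by linarith) (by positivity), mul_rpow zero_le_two hc.le,
      show 1 - q + 1 = 2 - q by ring, mul_div_right_comm]
  -- Both integrands are nonnegative, so we may compare lintegrals, where Tonelli is unconditional.
  rw [← integral_const_mul,
    integral_eq_lintegral_of_nonneg_ae (ae_of_all _ fun z => rpow_nonneg (norm_nonneg z) _)
      (by fun_prop : Measurable fun z : ℂ => ‖z‖ ^ (-q)).aestronglyMeasurable,
    integral_eq_lintegral_of_nonneg_ae
      (ae_restrict_of_forall_mem measurableSet_Ioo fun θ hθ =>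
        mul_nonneg (by positivity) (rpow_nonneg (cos_pos_of_mem_Ioo hθ).le _))
      (by fun_prop :
        Measurable fun θ => 2 ^ (2 - q) / (2 - q) * cos θ ^ (2 - q)).aestronglyMeasurable,
    lintegral_ball_one_comp_norm (fun r => ENNReal.ofReal (r ^ (-q))) (by fun_prop),
    setLIntegral_congr_fun measurableSet_Ioo hinner]

theorem stmt_9_general (q : ℝ) (hq2 : q < 2) :
    (Real.pi)⁻¹ * ∫ w in ball (0 : ℂ) 1, ‖1 - w‖ ^ (-q)
      = Real.Gamma (2 - q) / (Real.Gamma (2 - q / 2)) ^ 2 := by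
  have hs : 0 < 2 - q := by linarith
  rw [setIntegral_ball_comp_sub_left volume (fun z => ‖z‖ ^ (-q)) 1 0 1, sub_zero,
    integral_ball_one_norm_rpow_neg hq2, integral_cos_rpow (by linarith)]
  have hdup := two_rpow_mul_Gamma_mul_Gamma_add_half (2 - q)
  rw [Gamma_add_one hs.ne'] at hdup
  have hG : 0 < Gamma ((2 - q) / 2 + 1) := Gamma_pos_of_pos (by positivity)
  rw [show 2 - q / 2 = (2 - q) / 2 + 1 by ring]
  generalize Gamma ((2 - q) / 2 + 1) = G at hdup hG ⊢
  field_simp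
  linear_combination √π * hdup + (2 - q) * Gamma (2 - q) * sq_sqrt pi_pos.le

theorem stmt_9 (q : ℝ) (hq1 : 1 ≤ q) (hq2 : q < 2) :
    (Real.pi)⁻¹ * ∫ w in ball (0 : ℂ) 1, ‖1 - w‖ ^ (-q)
      = Real.Gamma (2 - q) / (Real.Gamma (2 - q / 2)) ^ 2 :=
  stmt_9_general q hq2
end

section
/- Let d ≥ 1 be an integer and u ∈ L²((0,1), x dx). Then ∫_0^1 |∫_r^1 ρ^{1−d} u(ρ) dρ|² r^{2d−1} dr ≤ (1/j_{d−1}²) ∫_0^1 ρ |u(ρ)|² dρ, where j_{d−1} is the smallest positive zero of the Bessel function J_{d−1}. -/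
/-!
Put `a = d - 1` and write `J_a(x) = x^a P_a(x)` with `P_a` entire; then `P_a' = -x P_{a+1}` and
`(x^(2a+2) P_{a+1})' = x^(2a+1) P_a`. Since `j` is the first positive zero, `P_a > 0` on `[0, j)`
and `P_{a+1} > 0` on `(0, j]`, so `φ(ρ) = P_{a+1}(jρ)` is a positive ground state on `(0, 1)`.
Cauchy–Schwarz with the weight `ρ φ(ρ)` gives
`|∫_r^1 ρ^(-a) u|² ≤ (P_a(jr) / j²) ∫_r^1 ρ |u|² / (ρ^(2a+2) φ(ρ))`, the first factor because
`P_a(j) = 0`. Multiplying by `r^(2a+1)` and integrating in `r` first, the second identity turns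
`∫_0^ρ r^(2a+1) P_a(jr) dr` into `ρ^(2a+2) φ(ρ)`, which cancels the denominator.
-/

open MeasureTheory

/-- The Bessel function of the first kind of nonnegative integer order. -/
noncomputable def besselJ (a : ℕ) (x : ℝ) : ℝ :=
  ∑' k : ℕ, (-1 : ℝ) ^ k / (k.factorial * Real.Gamma (k + a + 1)) * (x / 2) ^ (2 * k + a)

open Set
open scoped ENNReal

section BesselSeries

open Nat

lemma summable_pow_two_mul_add_div_factorial (m : ℕ) (z : ℝ) :
    Summable fun k : ℕ => z ^ (2 * k + m) / k ! := by
  refine ((Real.summable_pow_div_factorial (z ^ 2)).mul_left (z ^ m)).congr fun k => ?_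
  rw [pow_add, pow_mul]
  ring

lemma summable_mul_pow_two_mul_add {c : ℕ → ℝ} (hc : ∀ k, |c k| ≤ 1 / k !) (m : ℕ) (x : ℝ) :
    Summable fun k => c k * x ^ (2 * k + m) := by
  refine .of_norm_bounded (summable_pow_two_mul_add_div_factorial m (|x|)) fun k => ?_
  rw [norm_mul, norm_pow, Real.norm_eq_abs, Real.norm_eq_abs, div_eq_mul_inv,
    mul_comm _ (k ! : ℝ)⁻¹, ← one_div]
  gcongr
  exact hc k

lemma hasDerivAt_tsum_mul_pow_two_mul_add {c : ℕ → ℝ} (hc : ∀ k, |c k| ≤ 1 / k !) (m : ℕ)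
    (x : ℝ) :
    HasDerivAt (fun y => ∑' k, c k * y ^ (2 * k + m))
      (∑' k, c k * ((2 * k + m : ℕ) * x ^ (2 * k + m - 1))) x := by
  set R : ℝ := |x| + 1
  have hR : 1 ≤ R := by simp [R]
  have hbound : ∀ k, ∀ y ∈ Metric.ball (0 : ℝ) R,
      ‖c k * ((2 * k + m : ℕ) * y ^ (2 * k + m - 1))‖ ≤ (2 * R) ^ (2 * k + m) / k ! := by
    intro k y hy
    have hyR : |y| ≤ R := by
      rw [Metric.mem_ball, Real.dist_eq, sub_zero] at hy
      exact hy.le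
    rw [norm_mul, norm_mul, norm_pow, Real.norm_eq_abs, Real.norm_eq_abs, Real.norm_eq_abs,
      Nat.abs_cast, mul_pow, div_eq_mul_inv, mul_comm _ (k ! : ℝ)⁻¹, ← one_div]
    gcongr ?_ * ?_
    · exact hc k
    · have hn : ((2 * k + m : ℕ) : ℝ) ≤ 2 ^ (2 * k + m) := by
        exact_mod_cast Nat.lt_two_pow_self.le
      have hy : |y| ^ (2 * k + m - 1) ≤ R ^ (2 * k + m) :=
        (pow_le_pow_left₀ (abs_nonneg y) hyR _).trans (pow_le_pow_right₀ hR (Nat.sub_le _ _))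
      exact mul_le_mul hn hy (by positivity) (by positivity)
  have hx : x ∈ Metric.ball (0 : ℝ) R := by simp [R]
  exact hasDerivAt_tsum_of_isPreconnected (summable_pow_two_mul_add_div_factorial m (2 * R))
    Metric.isOpen_ball (convex_ball 0 R).isPreconnected
    (fun k y _ => (hasDerivAt_pow _ y).const_mul (c k)) hbound hx
    (summable_mul_pow_two_mul_add hc m x) hx

noncomputable def besselCoeff (a k : ℕ) : ℝ := (-1) ^ k / (k ! * (k + a)! * 2 ^ (2 * k + a))

/-- The entire function `J_a(x) / x^a`. -/
noncomputable def besselJDivPow (a : ℕ) (x : ℝ) : ℝ := ∑' k, besselCoeff a k * x ^ (2 * k)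

lemma abs_besselCoeff_le (a k : ℕ) : |besselCoeff a k| ≤ 1 / k ! := by
  rw [besselCoeff, abs_div, abs_pow, abs_neg, abs_one, one_pow, abs_of_pos (by positivity)]
  gcongr
  calc (k ! : ℝ) = k ! * 1 * 1 := by ring
    _ ≤ k ! * (k + a)! * 2 ^ (2 * k + a) := by
      gcongr
      · exact_mod_cast (k + a).factorial_pos
      · exact one_le_pow₀ one_le_two

lemma besselCoeff_succ_mul (a k : ℕ) :
    besselCoeff a (k + 1) * (2 * (k + 1) : ℕ) = -besselCoeff (a + 1) k := by
  rw [besselCoeff, besselCoeff, show k + 1 + a = k + (a + 1) by omega,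
    show 2 * (k + 1) + a = 2 * k + (a + 1) + 1 by omega, Nat.factorial_succ]
  push_cast
  field_simp
  ring

lemma besselCoeff_order_succ_mul (a k : ℕ) :
    besselCoeff (a + 1) k * (2 * k + (2 * a + 2) : ℕ) = besselCoeff a k := by
  rw [besselCoeff, besselCoeff, show k + (a + 1) = k + a + 1 by omega,
    show 2 * k + (a + 1) = 2 * k + a + 1 by omega, Nat.factorial_succ]
  push_cast
  field_simp
  ring

lemma besselJ_eq_pow_mul_besselJDivPow (a : ℕ) (x : ℝ) :
    besselJ a x = x ^ a * besselJDivPow a x := by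
  rw [besselJDivPow, ← tsum_mul_left, besselJ]
  refine tsum_congr fun k => ?_
  rw [show (k : ℝ) + a + 1 = (k + a : ℕ) + 1 by push_cast; ring, Real.Gamma_nat_eq_factorial,
    besselCoeff, div_pow, pow_add, pow_mul]
  ring

lemma besselJDivPow_zero (a : ℕ) : besselJDivPow a 0 = besselCoeff a 0 := by
  rw [besselJDivPow, tsum_eq_single 0 fun k hk => by simp [hk]]
  simp

lemma hasDerivAt_besselJDivPow (a : ℕ) (x : ℝ) :
    HasDerivAt (besselJDivPow a) (-x * besselJDivPow (a + 1) x) x := by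
  have h := hasDerivAt_tsum_mul_pow_two_mul_add (abs_besselCoeff_le a) 0 x
  simp only [Nat.add_zero] at h
  have hshift : ∀ k, besselCoeff a (k + 1) * ((2 * (k + 1) : ℕ) * x ^ (2 * (k + 1) - 1))
      = -x * (besselCoeff (a + 1) k * x ^ (2 * k)) := fun k => by
    rw [show 2 * (k + 1) - 1 = 2 * k + 1 by omega, pow_succ, ← mul_assoc, besselCoeff_succ_mul]
    ring
  rw [tsum_eq_zero_add' (by simpa only [hshift, Nat.add_zero] using
      ((summable_mul_pow_two_mul_add (abs_besselCoeff_le (a + 1)) 0 x).mul_left (-x))),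
    tsum_congr hshift, tsum_mul_left] at h
  simp only [mul_zero, Nat.cast_zero, zero_mul, zero_add] at h
  exact h

lemma hasDerivAt_pow_mul_besselJDivPow_succ (a : ℕ) (x : ℝ) :
    HasDerivAt (fun y => y ^ (2 * a + 2) * besselJDivPow (a + 1) y)
      (x ^ (2 * a + 1) * besselJDivPow a x) x := by
  have h := hasDerivAt_tsum_mul_pow_two_mul_add (abs_besselCoeff_le (a + 1)) (2 * a + 2) x
  convert h using 1
  · ext y
    rw [besselJDivPow, ← tsum_mul_left]
    exact tsum_congr fun k => by ring
  · rw [besselJDivPow, ← tsum_mul_left]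
    refine tsum_congr fun k => ?_
    rw [show 2 * k + (2 * a + 2) - 1 = 2 * k + (2 * a + 1) by omega, pow_add,
      ← besselCoeff_order_succ_mul]
    ring

lemma continuous_besselJDivPow (a : ℕ) : Continuous (besselJDivPow a) :=
  continuous_iff_continuousAt.2 fun x => (hasDerivAt_besselJDivPow a x).continuousAt

lemma continuous_besselJDivPow_const_mul (a : ℕ) (j : ℝ) :
    Continuous fun x => besselJDivPow a (j * x) :=
  (continuous_besselJDivPow a).comp (continuous_const.mul continuous_id)

lemma besselJDivPow_pos_of_lt {a : ℕ} {j : ℝ}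
    (hj : ∀ x, 0 < x → x < j → besselJDivPow a x ≠ 0) {x : ℝ} (hx0 : 0 ≤ x) (hxj : x < j) :
    0 < besselJDivPow a x := by
  have h0 : 0 < besselJDivPow a 0 := by
    rw [besselJDivPow_zero, besselCoeff]
    positivity
  by_contra! hx
  obtain ⟨c, hc, hc0⟩ := intermediate_value_Icc' hx0
    (continuous_besselJDivPow a).continuousOn ⟨hx, h0.le⟩
  have hc_pos : 0 < c := hc.1.lt_of_ne fun h => by
    rw [← h] at hc0
    exact h0.ne' hc0
  exact hj c hc_pos (hc.2.trans_lt hxj) hc0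

lemma integral_mul_besselJDivPow_succ (a : ℕ) {j : ℝ} (hj : j ≠ 0) (r s : ℝ) :
    ∫ ρ in r..s, ρ * besselJDivPow (a + 1) (j * ρ)
      = (besselJDivPow a (j * r) - besselJDivPow a (j * s)) / j ^ 2 := by
  have hderiv : ∀ ρ, HasDerivAt (fun t => -besselJDivPow a (j * t) / j ^ 2)
      (ρ * besselJDivPow (a + 1) (j * ρ)) ρ := fun ρ => by
    refine (((hasDerivAt_besselJDivPow a (j * ρ)).comp ρ
      ((hasDerivAt_id ρ).const_mul j)).neg.div_const (j ^ 2)).congr_deriv ?_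
    field_simp
  rw [intervalIntegral.integral_eq_sub_of_hasDerivAt (fun ρ _ => hderiv ρ)
    ((continuous_id.mul (continuous_besselJDivPow_const_mul _ j)).intervalIntegrable _ _)]
  ring

lemma integral_pow_mul_besselJDivPow (a : ℕ) {j : ℝ} (hj : j ≠ 0) (ρ : ℝ) :
    ∫ r in 0..ρ, r ^ (2 * a + 1) * besselJDivPow a (j * r)
      = ρ ^ (2 * a + 2) * besselJDivPow (a + 1) (j * ρ) := by
  have hderiv : ∀ r, HasDerivAt (fun t => t ^ (2 * a + 2) * besselJDivPow (a + 1) (j * t))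
      (r ^ (2 * a + 1) * besselJDivPow a (j * r)) r := fun r => by
    have h := ((hasDerivAt_pow_mul_besselJDivPow_succ a (j * r)).comp r
      ((hasDerivAt_id r).const_mul j)).div_const (j ^ (2 * a + 2))
    refine (h.congr_deriv ?_).congr_of_eventuallyEq (.of_eq (funext fun t => ?_))
    · simp only [mul_pow]
      field_simp
      ring
    · simp only [Function.comp_apply, mul_pow]
      field_simp
  rw [intervalIntegral.integral_eq_sub_of_hasDerivAt (fun r _ => hderiv r)
    (((continuous_pow _).mul (continuous_besselJDivPow_const_mul _ j)).intervalIntegrable _ _)]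
  simp

lemma besselJDivPow_succ_pos_of_le {a : ℕ} {j : ℝ}
    (hj : ∀ x, 0 < x → x < j → besselJDivPow a x ≠ 0) {x : ℝ} (hx0 : 0 < x) (hxj : x ≤ j) :
    0 < besselJDivPow (a + 1) x := by
  have hint : 0 < ∫ r in 0..x, r ^ (2 * a + 1) * besselJDivPow a (1 * r) :=
    intervalIntegral.intervalIntegral_pos_of_pos_on
      (((continuous_pow _).mul (continuous_besselJDivPow_const_mul _ 1)).intervalIntegrable _ _)
      (fun r hr => mul_pos (pow_pos hr.1 _) (by
        rw [one_mul]; exact besselJDivPow_pos_of_lt hj hr.1.le (hr.2.trans_le hxj)))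
      hx0
  rw [integral_pow_mul_besselJDivPow a one_ne_zero, one_mul] at hint
  exact pos_of_mul_pos_right hint (by positivity)

end BesselSeries

lemma lintegral_mul_sq_le {α : Type*} [MeasurableSpace α] (μ : Measure α) {f g : α → ℝ≥0∞}
    (hf : AEMeasurable f μ) (hg : AEMeasurable g μ) :
    (∫⁻ x, f x * g x ∂μ) ^ 2 ≤ (∫⁻ x, f x ^ 2 ∂μ) * ∫⁻ x, g x ^ 2 ∂μ := by
  have hhalf : ∀ x : ℝ≥0∞, (x ^ (1 / 2 : ℝ)) ^ 2 = x := fun x => by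
    rw [← ENNReal.rpow_natCast, ← ENNReal.rpow_mul]
    norm_num
  calc (∫⁻ x, f x * g x ∂μ) ^ 2
      ≤ ((∫⁻ x, f x ^ 2 ∂μ) ^ (1 / 2 : ℝ) * (∫⁻ x, g x ^ 2 ∂μ) ^ (1 / 2 : ℝ)) ^ 2 := by
        gcongr
        simpa using ENNReal.lintegral_mul_le_Lp_mul_Lq μ Real.HolderConjugate.two_two hf hg
    _ = (∫⁻ x, f x ^ 2 ∂μ) * ∫⁻ x, g x ^ 2 ∂μ := by rw [mul_pow, hhalf, hhalf]

lemma ofReal_norm_integral_sq_le {α E : Type*} [MeasurableSpace α] [NormedAddCommGroup E]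
    [NormedSpace ℝ E] {μ : Measure α} {g : α → E} {φ : α → ℝ} (hφ : AEMeasurable φ μ)
    (hφ_pos : ∀ᵐ x ∂μ, 0 < φ x) :
    ENNReal.ofReal (‖∫ x, g x ∂μ‖ ^ 2)
      ≤ (∫⁻ x, ENNReal.ofReal (φ x) ∂μ) * ∫⁻ x, ENNReal.ofReal (‖g x‖ ^ 2 / φ x) ∂μ := by
  by_cases hg : AEStronglyMeasurable g μ
  swap
  · simp [integral_undef fun h => hg h.1]
  have hsplit : ∀ᵐ x ∂μ, ENNReal.ofReal ‖g x‖
      = ENNReal.ofReal √(φ x) * ENNReal.ofReal √(‖g x‖ ^ 2 / φ x) := by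
    filter_upwards [hφ_pos] with x hx
    rw [← ENNReal.ofReal_mul (Real.sqrt_nonneg _), ← Real.sqrt_mul hx.le,
      mul_div_cancel₀ _ hx.ne', Real.sqrt_sq (norm_nonneg _)]
  have hsq : ∀ y : ℝ, ENNReal.ofReal √y ^ 2 = ENNReal.ofReal y := fun y => by
    rcases le_or_gt 0 y with hy | hy
    · rw [← ENNReal.ofReal_pow (Real.sqrt_nonneg _), Real.sq_sqrt hy]
    · simp [Real.sqrt_eq_zero'.2 hy.le, ENNReal.ofReal_of_nonpos hy.le]
  calc ENNReal.ofReal (‖∫ x, g x ∂μ‖ ^ 2) = ENNReal.ofReal ‖∫ x, g x ∂μ‖ ^ 2 :=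
        ENNReal.ofReal_pow (norm_nonneg _) 2
    _ ≤ (∫⁻ x, ENNReal.ofReal ‖g x‖ ∂μ) ^ 2 := by
        gcongr
        exact ENNReal.ofReal_le_of_le_toReal (norm_integral_le_lintegral_norm g)
    _ = (∫⁻ x, ENNReal.ofReal √(φ x) * ENNReal.ofReal √(‖g x‖ ^ 2 / φ x) ∂μ) ^ 2 := by
        rw [lintegral_congr_ae hsplit]
    _ ≤ _ := by
        refine (lintegral_mul_sq_le μ ?_ ?_).trans_eq ?_
        · exact ENNReal.measurable_ofReal.comp_aemeasurable hφ.sqrt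
        · exact ENNReal.measurable_ofReal.comp_aemeasurable
            ((hg.norm.aemeasurable.pow_const 2).div hφ).sqrt
        · simp only [hsq]

lemma lintegral_mul_setLIntegral_Ioi_eq {μ : Measure ℝ} [SFinite μ] {K D : ℝ → ℝ≥0∞}
    (hK : AEMeasurable K μ) (hD : AEMeasurable D μ) :
    ∫⁻ r, K r * ∫⁻ ρ in Ioi r, D ρ ∂μ ∂μ = ∫⁻ ρ, (∫⁻ r in Iio ρ, K r ∂μ) * D ρ ∂μ := by
  have hmeas : AEMeasurable (Function.uncurry fun r ρ => {p : ℝ × ℝ | p.1 < p.2}.indicator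
      (fun p => K p.1 * D p.2) (r, ρ)) (μ.prod μ) :=
    (hK.comp_fst.mul hD.comp_snd).indicator (measurableSet_lt measurable_fst measurable_snd)
  calc ∫⁻ r, K r * ∫⁻ ρ in Ioi r, D ρ ∂μ ∂μ
      = ∫⁻ r, ∫⁻ ρ, {p : ℝ × ℝ | p.1 < p.2}.indicator (fun p => K p.1 * D p.2) (r, ρ) ∂μ ∂μ := by
        refine lintegral_congr fun r => ?_
        rw [← lintegral_indicator measurableSet_Ioi, ← lintegral_const_mul'' _
          (hD.indicator measurableSet_Ioi)]
        refine lintegral_congr fun ρ => ?_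
        by_cases h : r < ρ <;> simp [indicator, h]
    _ = ∫⁻ ρ, ∫⁻ r, {p : ℝ × ℝ | p.1 < p.2}.indicator (fun p => K p.1 * D p.2) (r, ρ) ∂μ ∂μ :=
        lintegral_lintegral_swap hmeas
    _ = ∫⁻ ρ, (∫⁻ r in Iio ρ, K r ∂μ) * D ρ ∂μ := by
        refine lintegral_congr fun ρ => ?_
        rw [← lintegral_indicator measurableSet_Iio, ← lintegral_mul_const'' _
          (hK.indicator measurableSet_Iio)]
        refine lintegral_congr fun r => ?_
        by_cases h : r < ρ <;> simp [indicator, h]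

lemma ofReal_norm_integral_Ioo_sq_le (a : ℕ) (u : ℝ → ℂ) {φ : ℝ → ℝ} (hφ : Continuous φ)
    {r : ℝ} (hr : 0 < r) (hφ_pos : ∀ ρ ∈ Ioo r 1, 0 < φ ρ) :
    ENNReal.ofReal (‖∫ ρ in Ioo r 1, (((ρ ^ a)⁻¹ : ℝ) : ℂ) * u ρ‖ ^ 2)
      ≤ ENNReal.ofReal (∫ ρ in Ioo r 1, ρ * φ ρ)
        * ∫⁻ ρ in Ioo r 1, ENNReal.ofReal (ρ * ‖u ρ‖ ^ 2 / (ρ ^ (2 * a + 2) * φ ρ)) := by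
  have hcont : Continuous fun ρ : ℝ => ρ * φ ρ := continuous_id.mul hφ
  have hpos : ∀ ρ ∈ Ioo r 1, 0 < ρ * φ ρ := fun ρ hρ => mul_pos (hr.trans hρ.1) (hφ_pos ρ hρ)
  have hD : ∀ ρ ∈ Ioo r 1, ENNReal.ofReal (‖(((ρ ^ a)⁻¹ : ℝ) : ℂ) * u ρ‖ ^ 2 / (ρ * φ ρ))
      = ENNReal.ofReal (ρ * ‖u ρ‖ ^ 2 / (ρ ^ (2 * a + 2) * φ ρ)) := fun ρ hρ => by
    have hρ0 : 0 < ρ := hr.trans hρ.1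
    have := hφ_pos ρ hρ
    rw [norm_mul, Complex.norm_real, Real.norm_eq_abs, abs_of_pos (by positivity)]
    congr 1
    field_simp
    ring
  have h := ofReal_norm_integral_sq_le (μ := volume.restrict (Ioo r 1))
    (g := fun ρ => (((ρ ^ a)⁻¹ : ℝ) : ℂ) * u ρ)
    hcont.aemeasurable ((ae_restrict_iff' measurableSet_Ioo).2 (.of_forall hpos))
  rwa [← ofReal_integral_eq_lintegral_ofReal
      ((hcont.integrableOn_Icc).mono_set Ioo_subset_Icc_self)
      ((ae_restrict_iff' measurableSet_Ioo).2 (.of_forall fun ρ hρ => (hpos ρ hρ).le)),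
    setLIntegral_congr_fun measurableSet_Ioo hD] at h

lemma nonneg_of_setIntegral_Ioo_mul_le {φ W : ℝ → ℝ} (hφ_pos : ∀ ρ ∈ Ioo (0 : ℝ) 1, 0 < φ ρ)
    (hφW : ∀ r ∈ Ioo (0 : ℝ) 1, ∫ ρ in Ioo r 1, ρ * φ ρ ≤ W r) {r : ℝ} (hr : r ∈ Ioo (0 : ℝ) 1) :
    0 ≤ W r :=
  (setIntegral_nonneg measurableSet_Ioo fun ρ hρ => (mul_pos (hr.1.trans hρ.1)
    (hφ_pos ρ ⟨hr.1.trans hρ.1, hρ.2⟩)).le).trans (hφW r hr)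

theorem lintegral_norm_integral_Ioo_sq_le {a : ℕ} {u : ℝ → ℂ}
    (hu : AEMeasurable (fun ρ => ρ * ‖u ρ‖ ^ 2) (volume.restrict (Ioo 0 1))) {φ W : ℝ → ℝ}
    {C : ℝ} (hφ : Continuous φ) (hW : Continuous W) (hφ_pos : ∀ ρ ∈ Ioo (0 : ℝ) 1, 0 < φ ρ)
    (hφW : ∀ r ∈ Ioo (0 : ℝ) 1, ∫ ρ in Ioo r 1, ρ * φ ρ ≤ W r)
    (hWφ : ∀ ρ ∈ Ioo (0 : ℝ) 1,
      ∫ r in Ioo 0 ρ, r ^ (2 * a + 1) * W r ≤ C * (ρ ^ (2 * a + 2) * φ ρ)) :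
    ∫⁻ r in Ioo 0 1,
        ENNReal.ofReal (‖∫ ρ in Ioo r 1, (((ρ ^ a)⁻¹ : ℝ) : ℂ) * u ρ‖ ^ 2 * r ^ (2 * a + 1))
      ≤ ∫⁻ ρ in Ioo 0 1, ENNReal.ofReal (C * (ρ * ‖u ρ‖ ^ 2)) := by
  set I : Set ℝ := Ioo 0 1
  set D : ℝ → ℝ := fun ρ => ρ * ‖u ρ‖ ^ 2 / (ρ ^ (2 * a + 2) * φ ρ)
  set K : ℝ → ℝ := fun r => r ^ (2 * a + 1) * W r
  have hKc : Continuous K := (continuous_pow _).mul hW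
  calc ∫⁻ r in I, ENNReal.ofReal
        (‖∫ ρ in Ioo r 1, (((ρ ^ a)⁻¹ : ℝ) : ℂ) * u ρ‖ ^ 2 * r ^ (2 * a + 1))
      ≤ ∫⁻ r in I, ENNReal.ofReal (K r)
          * ∫⁻ ρ in Ioi r, ENNReal.ofReal (D ρ) ∂volume.restrict I := by
        refine setLIntegral_mono' measurableSet_Ioo fun r hr => ?_
        rw [Measure.restrict_restrict measurableSet_Ioi, inter_comm, Ioo_inter_Ioi,
          max_eq_right hr.1.le, ENNReal.ofReal_mul (sq_nonneg _), mul_comm,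
          show K r = r ^ (2 * a + 1) * W r from rfl, ENNReal.ofReal_mul (pow_nonneg hr.1.le _),
          mul_assoc]
        gcongr
        exact (ofReal_norm_integral_Ioo_sq_le a u hφ hr.1 fun ρ hρ =>
          hφ_pos ρ ⟨hr.1.trans hρ.1, hρ.2⟩).trans (by gcongr; exact hφW r hr)
    _ = ∫⁻ ρ in I, (∫⁻ r in Iio ρ, ENNReal.ofReal (K r) ∂volume.restrict I)
          * ENNReal.ofReal (D ρ) :=
        lintegral_mul_setLIntegral_Ioi_eq hKc.measurable.ennreal_ofReal.aemeasurable
          (hu.div ((continuous_pow _).mul hφ).aemeasurable).ennreal_ofReal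
    _ ≤ ∫⁻ ρ in I, ENNReal.ofReal (C * (ρ ^ (2 * a + 2) * φ ρ)) * ENNReal.ofReal (D ρ) := by
        refine setLIntegral_mono' measurableSet_Ioo fun ρ hρ => ?_
        rw [Measure.restrict_restrict measurableSet_Iio, inter_comm, Ioo_inter_Iio,
          min_eq_right hρ.2.le, ← ofReal_integral_eq_lintegral_ofReal
            ((hKc.integrableOn_Icc).mono_set Ioo_subset_Icc_self)
            ((ae_restrict_iff' measurableSet_Ioo).2 (.of_forall fun r hr =>
              mul_nonneg (pow_nonneg hr.1.le _)
                (nonneg_of_setIntegral_Ioo_mul_le hφ_pos hφW ⟨hr.1, hr.2.trans hρ.2⟩)))]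
        gcongr
        exact hWφ ρ hρ
    _ = ∫⁻ ρ in I, ENNReal.ofReal (C * (ρ * ‖u ρ‖ ^ 2)) := by
        refine setLIntegral_congr_fun measurableSet_Ioo fun ρ hρ => ?_
        have := hρ.1
        have := hφ_pos ρ hρ
        rw [← ENNReal.ofReal_mul' (by positivity)]
        congr 1
        simp only [D]
        field_simp

theorem integral_norm_integral_Ioo_sq_le {a : ℕ} {u : ℝ → ℂ}
    (hu : IntegrableOn (fun ρ => ρ * ‖u ρ‖ ^ 2) (Ioo 0 1)) {φ W : ℝ → ℝ} {C : ℝ}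
    (hφ : Continuous φ) (hW : Continuous W) (hφ_pos : ∀ ρ ∈ Ioo (0 : ℝ) 1, 0 < φ ρ)
    (hφW : ∀ r ∈ Ioo (0 : ℝ) 1, ∫ ρ in Ioo r 1, ρ * φ ρ ≤ W r)
    (hWφ : ∀ ρ ∈ Ioo (0 : ℝ) 1,
      ∫ r in Ioo 0 ρ, r ^ (2 * a + 1) * W r ≤ C * (ρ ^ (2 * a + 2) * φ ρ)) :
    ∫ r in Ioo 0 1, ‖∫ ρ in Ioo r 1, (((ρ ^ a)⁻¹ : ℝ) : ℂ) * u ρ‖ ^ 2 * r ^ (2 * a + 1)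
      ≤ C * ∫ ρ in Ioo 0 1, ρ * ‖u ρ‖ ^ 2 := by
  have hC : 0 ≤ C := by
    have hhalf : (1 / 2 : ℝ) ∈ Ioo 0 1 := ⟨by norm_num, by norm_num⟩
    have := hφ_pos _ hhalf
    refine (mul_nonneg_iff_of_pos_right (by positivity)).1 ((setIntegral_nonneg
      measurableSet_Ioo fun r hr => mul_nonneg (pow_nonneg hr.1.le _) ?_).trans (hWφ _ hhalf))
    exact nonneg_of_setIntegral_Ioo_mul_le hφ_pos hφW ⟨hr.1, hr.2.trans (by norm_num)⟩
  have hu_nonneg : 0 ≤ᵐ[volume.restrict (Ioo 0 1)] fun ρ => C * (ρ * ‖u ρ‖ ^ 2) :=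
    (ae_restrict_iff' measurableSet_Ioo).2 (.of_forall fun ρ hρ => by have := hρ.1; positivity)
  have hRHS : 0 ≤ C * ∫ ρ in Ioo 0 1, ρ * ‖u ρ‖ ^ 2 := by
    rw [← integral_const_mul]
    exact integral_nonneg_of_ae hu_nonneg
  by_cases hm : AEStronglyMeasurable
    (fun r => ‖∫ ρ in Ioo r 1, (((ρ ^ a)⁻¹ : ℝ) : ℂ) * u ρ‖ ^ 2 * r ^ (2 * a + 1))
    (volume.restrict (Ioo 0 1))
  swap
  · rwa [integral_undef fun h => hm h.1]
  rw [integral_eq_lintegral_of_nonneg_ae ((ae_restrict_iff' measurableSet_Ioo).2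
    (.of_forall fun r hr => by have := hr.1; positivity)) hm, ← integral_const_mul]
  refine ENNReal.toReal_le_of_le_ofReal (by rwa [integral_const_mul]) ?_
  rw [ofReal_integral_eq_lintegral_ofReal (hu.const_mul C) hu_nonneg]
  exact lintegral_norm_integral_Ioo_sq_le hu.1.aemeasurable hφ hW hφ_pos hφW hWφ

theorem stmt_13 (d : ℤ) (hd : 1 ≤ d) (u : ℝ → ℂ)
    (hu : IntegrableOn (fun ρ : ℝ => ρ * ‖u ρ‖ ^ 2) (Set.Ioo (0 : ℝ) 1))
    (j : ℝ) (hj0 : 0 < j) (hjz : besselJ (d - 1).toNat j = 0)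
    (hjmin : ∀ x : ℝ, 0 < x → x < j → besselJ (d - 1).toNat x ≠ 0) :
    (∫ r in Set.Ioo (0 : ℝ) 1,
        ‖∫ ρ in Set.Ioo r 1, ((ρ ^ (1 - d) : ℝ) : ℂ) * u ρ‖ ^ 2
          * r ^ (2 * d - 1))
      ≤ 1 / j ^ 2 * ∫ ρ in Set.Ioo (0 : ℝ) 1, ρ * ‖u ρ‖ ^ 2 := by
  obtain ⟨a, rfl⟩ : ∃ a : ℕ, d = a + 1 := ⟨(d - 1).toNat, by omega⟩
  simp only [add_sub_cancel_right, Int.toNat_natCast, besselJ_eq_pow_mul_besselJDivPow]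
    at hjz hjmin
  have hP : ∀ x, 0 < x → x < j → besselJDivPow a x ≠ 0 := fun x hx hxj h =>
    hjmin x hx hxj (by rw [h, mul_zero])
  have hPj : besselJDivPow a j = 0 := (mul_eq_zero.1 hjz).resolve_left (pow_ne_zero _ hj0.ne')
  have hkernel : ∀ ρ : ℝ, ρ ^ (1 - ((a : ℤ) + 1)) = (ρ ^ a)⁻¹ := fun ρ => by
    rw [show 1 - ((a : ℤ) + 1) = -(a : ℤ) by ring, zpow_neg, zpow_natCast]
  have hweight : ∀ r : ℝ, r ^ (2 * ((a : ℤ) + 1) - 1) = r ^ (2 * a + 1) := fun r => by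
    rw [show 2 * ((a : ℤ) + 1) - 1 = ((2 * a + 1 : ℕ) : ℤ) by push_cast; ring, zpow_natCast]
  simp only [hkernel, hweight]
  refine integral_norm_integral_Ioo_sq_le hu (continuous_besselJDivPow_const_mul (a + 1) j)
    ((continuous_besselJDivPow_const_mul a j).div_const (j ^ 2))
    (fun ρ hρ => besselJDivPow_succ_pos_of_le hP (mul_pos hj0 hρ.1)
      (mul_le_of_le_one_right hj0.le hρ.2.le))
    (fun r hr => le_of_eq ?_) (fun ρ hρ => le_of_eq ?_)
  · rw [← integral_Ioc_eq_integral_Ioo, ← intervalIntegral.integral_of_le hr.2.le,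
      integral_mul_besselJDivPow_succ a hj0.ne', mul_one, hPj, sub_zero]
  · simp_rw [← mul_div_assoc]
    rw [integral_div, ← integral_Ioc_eq_integral_Ioo, ← intervalIntegral.integral_of_le hρ.1.le,
      integral_pow_mul_besselJDivPow a hj0.ne']
    ring
end

section
/- Let d > 1 be an integer and (b_n)_{n≥0} complex numbers with finitely many nonzero. Define on the unit disk h(z) = Σ_{n≥0} b_n ( ((n+d)/(n+1)) z^{n+d−1} \bar{z}^{n+1} − ((d−1)/(n+1)) z^{d−2} ). Then ∫_{\mathbb{D}} |h(z)|² dA(z) = Σ_{n,l ≥ 0} b_n \bar{b}_l/(n + l + d + 1). -/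
open MeasureTheory Metric

/-!
Write `T n` for the Beurling image of `z ^ (n + d) * conj z ^ n`, so that `h = ∑ b n * T n`
and `∫ |h|² = ∑ b n * conj (b l) * ∫ T n * conj (T l)`. Each product `T n * conj (T l)` is a
combination of the radial functions `|z| ^ (2 * a)`, whose integrals over `𝔻` are `π / (a + 1)`.
This makes `∫ T n * conj (T l) = π / (n + l + d + 1)` an algebraic identity, which comes down to
`(n + d) * (l + d) - (d - 1) * (n + l + d + 1) = (n + 1) * (l + 1)`.
-/

open Set ComplexConjugate

theorem Continuous.integrableOn_ball {X E : Type*} [MetricSpace X] [ProperSpace X]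
    [MeasurableSpace X] [OpensMeasurableSpace X] [NormedAddCommGroup E] {μ : Measure X}
    [IsFiniteMeasureOnCompacts μ] {f : X → E} (hf : Continuous f) (x : X) (r : ℝ) :
    IntegrableOn f (ball x r) μ :=
  (hf.continuousOn.integrableOn_compact (isCompact_closedBall x r)).mono_set ball_subset_closedBall

theorem integral_norm_finsetSum_sq {α ι : Type*} [MeasurableSpace α] {μ : Measure α}
    (s : Finset ι) (c : ι → ℂ) (f : ι → α → ℂ)
    (hf : ∀ i ∈ s, ∀ j ∈ s, Integrable (fun x => f i x * conj (f j x)) μ) :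
    ∫ x, ((‖∑ i ∈ s, c i * f i x‖ : ℝ) : ℂ) ^ 2 ∂μ
      = ∑ i ∈ s, ∑ j ∈ s, c i * conj (c j) * ∫ x, f i x * conj (f j x) ∂μ := by
  have hexpand : ∀ x, ((‖∑ i ∈ s, c i * f i x‖ : ℝ) : ℂ) ^ 2
      = ∑ i ∈ s, ∑ j ∈ s, c i * conj (c j) * (f i x * conj (f j x)) := by
    intro x
    rw [← Complex.mul_conj', map_sum, Finset.sum_mul_sum]
    refine Finset.sum_congr rfl fun i _ => Finset.sum_congr rfl fun j _ => ?_
    rw [map_mul]; ring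
  have hint : ∀ i ∈ s, ∀ j ∈ s,
      Integrable (fun x => c i * conj (c j) * (f i x * conj (f j x))) μ :=
    fun i hi j hj => (hf i hi j hj).const_mul _
  simp_rw [hexpand]
  rw [integral_finsetSum s fun i hi => integrable_finsetSum s (hint i hi)]
  refine Finset.sum_congr rfl fun i hi => ?_
  rw [integral_finsetSum s (hint i hi)]
  exact Finset.sum_congr rfl fun j _ => integral_const_mul _ _

theorem integral_ball_norm_pow_two_mul (a : ℕ) :
    ∫ z in ball (0 : ℂ) 1, ‖z‖ ^ (2 * a) = Real.pi / (a + 1) := by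
  have hind : (ball (0 : ℂ) 1).indicator (fun z => ‖z‖ ^ (2 * a))
      = fun z => (Iio (1 : ℝ)).indicator (fun r => r ^ (2 * a)) ‖z‖ := by
    ext z; simp [indicator]
  have hvol : volume.real (ball (0 : ℂ) 1) = Real.pi := by simp [Measure.real]
  have hradial : ∫ r in Ioi (0 : ℝ), r ^ 1 • (Iio 1).indicator (fun r => r ^ (2 * a)) r
      = 1 / (2 * (a + 1)) := by
    have hmul : ∀ r : ℝ, r ^ 1 • (Iio 1).indicator (fun r => r ^ (2 * a)) r
        = (Iio 1).indicator (fun r => r ^ (2 * a + 1)) r := by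
      intro r; by_cases hr : r < 1 <;> simp [indicator, hr, pow_succ']
    simp_rw [hmul]
    rw [setIntegral_indicator measurableSet_Iio, Ioi_inter_Iio, ← integral_Ioc_eq_integral_Ioo,
      ← intervalIntegral.integral_of_le zero_le_one, integral_pow]
    push_cast; ring
  rw [← integral_indicator measurableSet_ball, hind, integral_fun_norm_addHaar,
    Complex.finrank_real_complex, hradial, hvol, nsmul_eq_mul, smul_eq_mul]
  field_simp
  norm_num

theorem integral_ball_mul_conj_pow (a : ℕ) :
    ∫ z in ball (0 : ℂ) 1, (z * conj z) ^ a = Real.pi / (a + 1) := by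
  have hnorm : ∀ z : ℂ, (z * conj z) ^ a = ((‖z‖ ^ (2 * a) : ℝ) : ℂ) := by
    intro z; rw [Complex.mul_conj, Complex.normSq_eq_norm_sq]; push_cast; ring
  simp_rw [hnorm]
  rw [integral_complex_ofReal, integral_ball_norm_pow_two_mul]
  push_cast; rfl

theorem beurling_gram_coeff_identity {K : Type*} [Field K] {x y d : K}
    (hx : x + 1 ≠ 0) (hy : y + 1 ≠ 0) (hxd : x + d ≠ 0) (hyd : y + d ≠ 0)
    (hN : x + y + d + 1 ≠ 0) :
    (x + d) / (x + 1) * ((y + d) / (y + 1)) / (x + y + d + 1)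
      - (x + d) / (x + 1) * ((d - 1) / (y + 1)) / (x + d)
      - (d - 1) / (x + 1) * ((y + d) / (y + 1)) / (y + d)
      + (d - 1) / (x + 1) * ((d - 1) / (y + 1)) / (d - 1)
      = 1 / (x + y + d + 1) := by
  field_simp
  ring

/-- The Beurling transform on `𝔻` of `z ^ (n + d) * conj z ^ n`. -/
noncomputable def beurlingTerm (d n : ℕ) (z : ℂ) : ℂ :=
  ((n + d : ℂ) / (n + 1)) * z ^ (n + d - 1) * (starRingEnd ℂ z) ^ (n + 1)
    - ((d - 1 : ℂ) / (n + 1)) * z ^ (d - 2)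

@[fun_prop]
theorem continuous_beurlingTerm (d n : ℕ) : Continuous (beurlingTerm d n) := by
  unfold beurlingTerm; fun_prop

theorem integral_beurlingTerm_mul_conj {d : ℕ} (hd : 1 < d) (n l : ℕ) :
    ∫ z in ball (0 : ℂ) 1, beurlingTerm d n z * conj (beurlingTerm d l z)
      = Real.pi / ((n : ℂ) + l + d + 1) := by
  obtain ⟨e, rfl⟩ : ∃ e, d = e + 2 := ⟨d - 2, by omega⟩
  set cn : ℂ := (n + (e + 2 : ℕ)) / (n + 1)
  set cl : ℂ := (l + (e + 2 : ℕ)) / (l + 1)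
  set en : ℂ := ((e + 2 : ℕ) - 1) / (n + 1)
  set el : ℂ := ((e + 2 : ℕ) - 1) / (l + 1)
  have hexpand : ∀ z : ℂ, beurlingTerm (e + 2) n z * conj (beurlingTerm (e + 2) l z)
      = cn * cl * (z * conj z) ^ (n + l + e + 2) - cn * el * (z * conj z) ^ (n + e + 1)
        - en * cl * (z * conj z) ^ (l + e + 1) + en * el * (z * conj z) ^ e := by
    intro z
    simp only [beurlingTerm, map_sub, map_mul, map_pow, map_div₀, map_add, map_natCast,
      map_one, Complex.conj_conj, show n + (e + 2) - 1 = n + e + 1 by omega,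
      show l + (e + 2) - 1 = l + e + 1 by omega, Nat.add_sub_cancel]
    ring
  have hint (c : ℂ) (a : ℕ) : IntegrableOn (fun z : ℂ => c * (z * conj z) ^ a) (ball 0 1) :=
    Continuous.integrableOn_ball (by fun_prop) 0 1
  simp_rw [hexpand]
  rw [integral_add ?int3 (hint _ _), integral_sub ?int2 (hint _ _),
    integral_sub (hint _ _) (hint _ _)]
  case int2 => exact (hint _ _).sub (hint _ _)
  case int3 => exact ((hint _ _).sub (hint _ _)).sub (hint _ _)
  simp only [integral_const_mul, integral_ball_mul_conj_pow]
  have key := beurling_gram_coeff_identity (K := ℂ) (x := n) (y := l) (d := (e + 2 : ℕ))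
    (by norm_cast) (by norm_cast) (by norm_cast) (by norm_cast) (by norm_cast)
  simp only [cn, cl, en, el]
  push_cast at key ⊢
  linear_combination (Real.pi : ℂ) * key

theorem stmt_17 (d : ℕ) (hd : 1 < d) (b : ℕ → ℂ) (hb : (Function.support b).Finite)
    (h : ℂ → ℂ)
    (hh : ∀ z : ℂ, h z = ∑' n : ℕ,
      b n * (((n + d : ℂ) / (n + 1)) * z ^ (n + d - 1) * (starRingEnd ℂ z) ^ (n + 1)
        - ((d - 1 : ℂ) / (n + 1)) * z ^ (d - 2))) :
    ((Real.pi : ℂ))⁻¹ * (∫ z in ball (0 : ℂ) 1, ((‖h z‖ : ℝ) : ℂ) ^ 2)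
      = ∑' n : ℕ, ∑' l : ℕ, b n * starRingEnd ℂ (b l) / ((n : ℂ) + l + d + 1) := by
  set S := hb.toFinset
  have hbS : ∀ n ∉ S, b n = 0 := fun n hn => by simpa [S] using hn
  have hh' : ∀ z, h z = ∑ n ∈ S, b n * beurlingTerm d n z := fun z => by
    rw [hh z]; exact tsum_eq_sum fun n hn => by simp [hbS n hn]
  have hint : ∀ n ∈ S, ∀ l ∈ S, IntegrableOn
      (fun z => beurlingTerm d n z * conj (beurlingTerm d l z)) (ball 0 1) := fun n _ l _ =>
    Continuous.integrableOn_ball (by fun_prop) 0 1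
  have hrhs : ∀ n, ∑' l, b n * conj (b l) / ((n : ℂ) + l + d + 1)
      = ∑ l ∈ S, b n * conj (b l) / ((n : ℂ) + l + d + 1) := fun n =>
    tsum_eq_sum fun l hl => by simp [hbS l hl]
  simp_rw [hh', integral_norm_finsetSum_sq S b _ hint, integral_beurlingTerm_mul_conj hd, hrhs]
  rw [tsum_eq_sum (s := S) fun n hn => by simp [hbS n hn]]
  simp_rw [Finset.mul_sum, mul_div_left_comm _ (Real.pi : ℂ),
    inv_mul_cancel_left₀ (Complex.ofReal_ne_zero.mpr Real.pi_ne_zero)]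
end
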